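/- (Position of the punctures, §4.2.) Let n ≥ 4 and let (V₁, …, V_{2(n−1)}; B₊, B₋) be a stable 2(n−1)-gon of type D_n with B₋ ≤ B₊. Then at least n−2 of the 2(n−1) vertices V_j satisfy V_j < B₋ in the order on ℂ; consequently, in the increasing enumeration Y_{−n} ≤ ⋯ ≤ Y_{−1} ≤ Y₁ ≤ ⋯ ≤ Y_n of the 2n points {V_j} ∪ {B₊, B₋}, the puncture B₋ is either Y_{−1} or Y_{−2} (and, symmetrically, B₊ is either Y₁ or Y₂). -/
import Mathlib


noncomputable section

/-- The (strict) total order on `ℂ`: compare imaginary parts first, then real parts. -/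
def cLt (a b : ℂ) : Prop := a.im < b.im ∨ (a.im = b.im ∧ a.re < b.re)

/-- The corresponding non-strict order on `ℂ`. -/
def cLe (a b : ℂ) : Prop := cLt a b ∨ a = b

/-- `cross u v = Im (conj u * v)`. -/
def cross (u v : ℂ) : ℝ := ((starRingEnd ℂ) u * v).im

/-- A positively convex `h`-gon: every other vertex lies strictly to the left of each
directed edge from `V (j-1)` to `V j`. -/
def PosConvex {h : ℕ} (V : ZMod h → ℂ) : Prop :=
  ∀ j i : ZMod h, i ≠ j - 1 → i ≠ j →
    0 < cross (V j - V (j - 1)) (V i - V (j - 1))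

/-- The (open) level-`s` diagonal-gon of an `h`-gon. -/
def DiagGon {h : ℕ} (V : ZMod h → ℂ) (s : ℕ) : Set ℂ :=
  {P : ℂ | ∀ j : ZMod h, 0 < cross (V (j + (s : ZMod h)) - V j) (P - V j)}

/-- Edge vectors of an `h`-gon. -/
def zEdge {h : ℕ} (V : ZMod h → ℂ) (j : ZMod h) : ℂ := V j - V (j - 1)

/-- Central symmetry about `0` for a `2(n-1)`-gon. -/
def DSym (n : ℕ) (V : ZMod (2 * (n - 1)) → ℂ) : Prop :=
  ∀ j : ZMod (2 * (n - 1)), V (j + ((n - 1 : ℕ) : ZMod (2 * (n - 1)))) = -V j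

/-- A stable `2(n-1)`-gon of type `D_n`, with punctures `B₊ = B` and `B₋ = -B`. -/
def IsStableDGon (n : ℕ) (V : ZMod (2 * (n - 1)) → ℂ) (B : ℂ) : Prop :=
  PosConvex V ∧ DSym n V ∧ cLe (-B) B ∧
    (-B) ∈ DiagGon V (n - 2) ∧ B ∈ DiagGon V (n - 2)

/-- The `2n` marked points of a type `D_n` gon: the vertices together with the two punctures. -/
def DPoints (n : ℕ) (V : ZMod (2 * (n - 1)) → ℂ) (B : ℂ) :
    ZMod (2 * (n - 1)) ⊕ Fin 2 → ℂ :=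
  Sum.elim V (fun b => if b = 0 then B else -B)

/-- `Y 0, Y 1, …, Y (2n-1)` is an increasing enumeration (via the bijection `e`) of the
`2n` marked points; `Y i` corresponds to the point `Y_{i-n}` (for `0 ≤ i ≤ n-1`) resp.
`Y_{i-n+1}` (for `n ≤ i ≤ 2n-1`) of the paper. -/
def DEnum (n : ℕ) (V : ZMod (2 * (n - 1)) → ℂ) (B : ℂ) (Y : ℕ → ℂ)
    (e : Fin (2 * n) ≃ (ZMod (2 * (n - 1)) ⊕ Fin 2)) : Prop :=
  (∀ m : Fin (2 * n), Y (m : ℕ) = DPoints n V B (e m)) ∧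
  (∀ i j : ℕ, i < j → j < 2 * n → cLe (Y i) (Y j))


/-! ### Auxiliary machinery for the proof -/

attribute [local instance 10] Classical.propDecidable

lemma cross_def (u v : ℂ) : cross u v = u.re * v.im - u.im * v.re := by
  simp [cross, Complex.mul_im]; ring

lemma cLt_irrefl (a : ℂ) : ¬ cLt a a := by simp [cLt]

lemma cLt_asymm {a b : ℂ} (h : cLt a b) : ¬ cLt b a := by
  rcases h with h | ⟨h1, h2⟩ <;> rintro (g | ⟨g1, g2⟩) <;> linarith

lemma cLt_trans {a b c : ℂ} (h : cLt a b) (h' : cLt b c) : cLt a c := by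
  rcases h with h | ⟨h1, h2⟩ <;> rcases h' with g | ⟨g1, g2⟩ <;>
    [left; left; left; right] <;> first | linarith | exact ⟨by linarith, by linarith⟩

lemma cLt_trichotomy {a b : ℂ} (h : a ≠ b) : cLt a b ∨ cLt b a := by
  rcases lt_trichotomy a.im b.im with g | g | g
  · exact Or.inl (Or.inl g)
  · rcases lt_trichotomy a.re b.re with r | r | r
    · exact Or.inl (Or.inr ⟨g, r⟩)
    · exact absurd (Complex.ext r g) h
    · exact Or.inr (Or.inr ⟨g.symm, r⟩)
  · exact Or.inr (Or.inl g)

lemma cLt_neg {a b : ℂ} (h : cLt a b) : cLt (-b) (-a) := by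
  rcases h with h | ⟨h1, h2⟩
  · exact Or.inl (by simpa using h)
  · exact Or.inr ⟨by simp [h1], by simpa using h2⟩

lemma cLe_cLt_trans {a b c : ℂ} (h : cLe a b) (h' : cLt b c) : cLt a c := by
  rcases h with h | rfl
  · exact cLt_trans h h'
  · exact h'

lemma cLt_cLe_trans {a b c : ℂ} (h : cLt a b) (h' : cLe b c) : cLt a c := by
  rcases h' with h' | rfl
  · exact cLt_trans h h'
  · exact h


/-- threshold for the perturbation -/
def thr (x y : ℂ) : ℝ := if x.im < y.im then (y.im - x.im) / (1 + |x.re - y.re|) else 1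

lemma thr_pos (x y : ℂ) : 0 < thr x y := by
  unfold thr
  split
  · apply div_pos (by linarith) (by positivity)
  · norm_num

lemma g_lt_of_cLt {x y : ℂ} {ε : ℝ} (h : cLt x y) (hε : 0 < ε) (hthr : ε ≤ thr x y) :
    cross (1 - ε * Complex.I) x < cross (1 - ε * Complex.I) y := by
  have hre : (1 - ε * Complex.I).re = 1 := by simp
  have him : (1 - ε * Complex.I).im = -ε := by simp
  rw [cross_def, cross_def, hre, him]
  rcases h with h | ⟨h1, h2⟩
  · rw [thr, if_pos h] at hthr
    have hA : 0 ≤ |x.re - y.re| := abs_nonneg _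
    have h1 : x.re - y.re ≤ |x.re - y.re| := le_abs_self _
    have h2 : ε * (1 + |x.re - y.re|) ≤ y.im - x.im := by
      rw [← le_div_iff₀ (by positivity)]; exact hthr
    nlinarith [mul_le_mul_of_nonneg_left h1 hε.le]
  · rw [h1]; nlinarith

/-- Radon-type alternation lemma: four points whose relevant triples are positively
oriented cannot alternate strictly around a level of a linear functional. -/
lemma alternation {u P1 P2 P3 P4 : ℂ} {c : ℝ}
    (h123 : 0 < cross (P2 - P1) (P3 - P1))
    (h134 : 0 < cross (P3 - P1) (P4 - P1))
    (h234 : 0 < cross (P3 - P2) (P4 - P2))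
    (h124 : 0 < cross (P2 - P1) (P4 - P1))
    (g1 : c < cross u P1) (g2 : cross u P2 < c)
    (g3 : c < cross u P3) (g4 : cross u P4 < c) : False := by
  have key : cross (P3 - P2) (P4 - P2) * (cross u P1 - c)
      - cross (P3 - P1) (P4 - P1) * (cross u P2 - c)
      + cross (P2 - P1) (P4 - P1) * (cross u P3 - c)
      - cross (P2 - P1) (P3 - P1) * (cross u P4 - c) = 0 := by
    simp only [cross_def, Complex.sub_re, Complex.sub_im]; ring
  nlinarith [mul_pos h234 (by linarith : (0:ℝ) < cross u P1 - c),
    mul_pos h134 (by linarith : (0:ℝ) < c - cross u P2),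
    mul_pos h124 (by linarith : (0:ℝ) < cross u P3 - c),
    mul_pos h123 (by linarith : (0:ℝ) < c - cross u P4)]

lemma cross_sub_right (a x y : ℂ) : cross a (x - y) = cross a x - cross a y := by
  simp only [cross_def, Complex.sub_re, Complex.sub_im]; ring

/-- The parallelogram trap. -/
lemma trap {u X P P₀ R : ℂ}
    (h1 : 0 < cross (-P₀ - P) (X - P))
    (h2 : 0 < cross (P₀ - -P) (X - -P))
    (h3 : 0 < cross (R - P₀) (X - P₀))
    (h4 : 0 < cross (-R - -P₀) (X - -P₀))
    (hA : 0 < cross (P - P₀) (R - P₀))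
    (hB : 0 < cross (-P₀ - R) (P₀ - R))
    (hg1 : cross u X < cross u P)
    (hg2 : cross u X < cross u (-P))
    (hg3 : cross u X < cross u P₀)
    (hg4 : cross u X < cross u (-P₀)) : False := by
  set d : ℂ := -P₀ - P with hd
  set d₀ : ℂ := R - P₀ with hd₀
  have hD : 0 < cross d₀ d := by
    have : cross d₀ d = cross (-P₀ - R) (P₀ - R) + cross (P - P₀) (R - P₀) := by
      simp only [hd, hd₀, cross_def, Complex.sub_re, Complex.sub_im, Complex.neg_re,
        Complex.neg_im]; ring
    rw [this]; linarith
  have key : ∀ z w : ℂ, cross d₀ d * cross u (z - w)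
      = cross d₀ u * cross d (z - w) - cross d u * cross d₀ (z - w) := by
    intro z w
    simp only [cross_def, Complex.sub_re, Complex.sub_im]; ring
  -- auxiliary sign facts
  have s1 : 0 < cross d (X - P) := h1
  have s2 : cross d (X - -P) < 0 := by
    have e : cross d (X - -P) = -cross (P₀ - -P) (X - -P) := by
      simp only [hd, cross_def, Complex.sub_re, Complex.sub_im, Complex.neg_re,
        Complex.neg_im]; ring
    rw [e]; linarith
  have s3 : 0 < cross d₀ (X - P₀) := h3
  have s4 : cross d₀ (X - -P₀) < 0 := by
    have e : cross d₀ (X - -P₀) = -cross (-R - -P₀) (X - -P₀) := by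
      simp only [hd₀, cross_def, Complex.sub_re, Complex.sub_im, Complex.neg_re,
        Complex.neg_im]; ring
    rw [e]; linarith
  -- translated versions
  have s1' : 0 < cross d (X - -P₀) := by
    have e : cross d (X - -P₀) = cross d (X - P) + cross d (P - -P₀) := by
      simp only [cross_def, Complex.sub_re, Complex.sub_im, Complex.neg_re, Complex.neg_im]; ring
    have e2 : cross d (P - -P₀) = 0 := by
      simp only [hd, cross_def, Complex.sub_re, Complex.sub_im, Complex.neg_re, Complex.neg_im]
      ring
    rw [e, e2]; linarith
  have s2' : cross d (X - P₀) < 0 := by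
    have e : cross d (X - P₀) = cross d (X - -P) + cross d (-P - P₀) := by
      simp only [cross_def, Complex.sub_re, Complex.sub_im, Complex.neg_re, Complex.neg_im]; ring
    have e2 : cross d (-P - P₀) = 0 := by
      simp only [hd, cross_def, Complex.sub_re, Complex.sub_im, Complex.neg_re, Complex.neg_im]
      ring
    rw [e, e2]; linarith
  have s3' : 0 < cross d₀ (X - P) := by
    have e : cross d₀ (X - P) = cross d₀ (X - P₀) + cross (P - P₀) (R - P₀) := by
      simp only [hd₀, cross_def, Complex.sub_re, Complex.sub_im]; ring
    rw [e]; linarith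
  have s4' : cross d₀ (X - -P) < 0 := by
    have e : cross d₀ (X - -P) = cross d₀ (X - -P₀) - cross (P - P₀) (R - P₀) := by
      simp only [hd₀, cross_def, Complex.sub_re, Complex.sub_im, Complex.neg_re,
        Complex.neg_im]; ring
    rw [e]; linarith
  rcases le_or_gt 0 (cross d₀ u) with hα | hα <;> rcases le_or_gt 0 (cross d u) with hγ | hγ
  · -- cross d₀ u ≥ 0, cross d u ≥ 0 : corner -P₀
    have hk := key X (-P₀)
    have hm : cross u (X - -P₀) < 0 := by rw [cross_sub_right]; linarith
    nlinarith [mul_nonneg hα s1'.le, mul_nonneg hγ (neg_nonneg.2 s4.le),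
      mul_pos hD (neg_pos.2 hm)]
  · -- cross d₀ u ≥ 0, cross d u < 0 : corner P
    have hk := key X P
    have hm : cross u (X - P) < 0 := by rw [cross_sub_right]; linarith
    nlinarith [mul_nonneg hα s1.le, mul_pos (neg_pos.2 hγ) s3',
      mul_pos hD (neg_pos.2 hm)]
  · -- cross d₀ u < 0, cross d u ≥ 0 : corner -P
    have hk := key X (-P)
    have hm : cross u (X - -P) < 0 := by rw [cross_sub_right]; linarith
    nlinarith [mul_pos (neg_pos.2 hα) (neg_pos.2 s2), mul_nonneg hγ (neg_nonneg.2 s4'.le),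
      mul_pos hD (neg_pos.2 hm)]
  · -- cross d₀ u < 0, cross d u < 0 : corner P₀
    have hk := key X P₀
    have hm : cross u (X - P₀) < 0 := by rw [cross_sub_right]; linarith
    nlinarith [mul_pos (neg_pos.2 hα) (neg_pos.2 s2'), mul_pos (neg_pos.2 hγ) s3,
      mul_pos hD (neg_pos.2 hm)]

lemma zmod_cast_inj {h : ℕ} {a b : ℕ} (ha : a < h) (hb : b < h) (e : (a : ZMod h) = b) :
    a = b := by
  have := congrArg ZMod.val e
  rwa [ZMod.val_cast_of_lt ha, ZMod.val_cast_of_lt hb] at this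

lemma zmod_cast_succ {h a : ℕ} (ha : 0 < a) : ((a - 1 : ℕ) : ZMod h) + 1 = (a : ZMod h) := by
  have e : (a - 1) + 1 = a := by omega
  calc ((a - 1 : ℕ) : ZMod h) + 1 = (((a - 1) + 1 : ℕ) : ZMod h) := by push_cast; ring
    _ = (a : ZMod h) := by rw [e]

/-- From a large subset of `ZMod h` with a unique "run start", extract a long run. -/
lemma run_lemma {h : ℕ} (hh : 0 < h) (n : ℕ) (A : Finset (ZMod h))
    (hcard : n + 1 ≤ A.card) (hq : ∃ q, q ∉ A)
    (huniq : ∀ j j' : ZMod h, j ∉ A → j + 1 ∈ A → j' ∉ A → j' + 1 ∈ A → j = j') :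
    ∃ b : ZMod h, ∀ k : ℕ, k ≤ n → b + (k : ZMod h) ∈ A := by
  haveI : NeZero h := ⟨hh.ne'⟩
  classical
  obtain ⟨q, hqA⟩ := hq
  obtain ⟨a, haA⟩ := Finset.card_pos.1 (by omega : 0 < A.card)
  have haq : a ≠ q := fun e => hqA (e ▸ haA)
  have hexQ : ∃ t : ℕ, 0 < t ∧ q + (t : ZMod h) ∈ A := by
    refine ⟨(a - q).val, ZMod.val_pos.2 (sub_ne_zero.2 haq), ?_⟩
    rw [ZMod.natCast_rightInverse (a - q)]; simpa using haA
  set s₀ := Nat.find hexQ with hs₀def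
  obtain ⟨hs₀pos, hs₀A⟩ := Nat.find_spec hexQ
  have hs₀lt : s₀ < h := by
    have hle : s₀ ≤ (a - q).val := Nat.find_le ⟨ZMod.val_pos.2 (sub_ne_zero.2 haq), by
      rw [ZMod.natCast_rightInverse (a - q)]; simpa using haA⟩
    exact lt_of_le_of_lt hle (ZMod.val_lt _)
  have hstart : q + ((s₀ - 1 : ℕ) : ZMod h) ∉ A := by
    rcases Nat.eq_or_lt_of_le hs₀pos with e | l
    · have e0 : s₀ - 1 = 0 := by omega
      rw [e0]; simpa using hqA
    · intro hmem
      exact (Nat.find_min hexQ (by omega : s₀ - 1 < s₀)) ⟨by omega, hmem⟩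
  have hstart1 : q + ((s₀ - 1 : ℕ) : ZMod h) + 1 ∈ A := by
    rw [add_assoc, zmod_cast_succ hs₀pos]; exact hs₀A
  set b := q + (s₀ : ZMod h) with hbdef
  have hexR : ∃ t : ℕ, q + ((s₀ + t : ℕ) : ZMod h) ∉ A := by
    refine ⟨h - s₀, ?_⟩
    have e : ((s₀ + (h - s₀) : ℕ) : ZMod h) = 0 := by
      have e2 : s₀ + (h - s₀) = h := by omega
      rw [e2, ZMod.natCast_self]
    rwa [e, add_zero]
  set m := Nat.find hexR with hmdef
  have hspecR : q + ((s₀ + m : ℕ) : ZMod h) ∉ A := Nat.find_spec hexR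
  have hmA : ∀ t, t < m → q + ((s₀ + t : ℕ) : ZMod h) ∈ A := by
    intro t ht
    by_contra hc
    have hle2 : Nat.find hexR ≤ t := Nat.find_le hc
    omega
  have hsub : A ⊆ Finset.image (fun t : ℕ => q + ((s₀ + t : ℕ) : ZMod h)) (Finset.range m) := by
    intro x hx
    set tx := (x - b).val with htx
    have htxlt : tx < h := ZMod.val_lt _
    have hxeq : x = q + ((s₀ + tx : ℕ) : ZMod h) := by
      push_cast
      rw [← add_assoc, ← hbdef, htx, ZMod.natCast_rightInverse (x - b)]
      ring
    by_cases hcase : tx < m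
    · exact Finset.mem_image.2 ⟨tx, Finset.mem_range.2 hcase, hxeq.symm⟩
    exfalso
    push_neg at hcase
    have hWex : ∃ s : ℕ, m ≤ s ∧ s ≤ tx ∧ q + ((s₀ + s : ℕ) : ZMod h) ∈ A :=
      ⟨tx, hcase, le_refl _, by rw [← hxeq]; exact hx⟩
    set s₁ := Nat.find hWex with hs₁def
    obtain ⟨hs₁m, hs₁tx, hs₁A⟩ := Nat.find_spec hWex
    have hm0 : 0 < m := by
      rcases Nat.eq_zero_or_pos m with e | l
      · exfalso
        rw [e] at hspecR
        simp only [Nat.add_zero] at hspecR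
        exact hspecR hs₀A
      · exact l
    have hs₁gt : m < s₁ := by
      rcases Nat.eq_or_lt_of_le hs₁m with e | l
      · exfalso; rw [e] at hspecR; exact hspecR hs₁A
      · exact l
    have hprev : q + ((s₀ + (s₁ - 1) : ℕ) : ZMod h) ∉ A := by
      rcases Nat.eq_or_lt_of_le (by omega : m ≤ s₁ - 1) with e | l
      · rw [← e]; exact hspecR
      · intro hmem
        exact (Nat.find_min hWex (by omega : s₁ - 1 < s₁)) ⟨by omega, by omega, hmem⟩
    have hprev1 : q + ((s₀ + (s₁ - 1) : ℕ) : ZMod h) + 1 ∈ A := by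
      have e : ((s₀ + (s₁ - 1) : ℕ) : ZMod h) + 1 = ((s₀ + s₁ : ℕ) : ZMod h) := by
        have e2 : s₀ + (s₁ - 1) = (s₀ + s₁) - 1 := by omega
        rw [e2, zmod_cast_succ (by omega : 0 < s₀ + s₁)]
      rw [add_assoc, e]; exact hs₁A
    have heq := huniq _ _ hprev hprev1 hstart hstart1
    have hcast : ((s₀ + (s₁ - 1) : ℕ) : ZMod h) = ((s₀ - 1 : ℕ) : ZMod h) :=
      add_left_cancel heq
    have hz : ((s₁ : ℕ) : ZMod h) = 0 := by
      have e : s₀ + (s₁ - 1) = (s₀ - 1) + s₁ := by omega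
      rw [e, Nat.cast_add] at hcast
      exact add_eq_left.1 hcast
    have hdvd : h ∣ s₁ := (ZMod.natCast_eq_zero_iff _ _).1 hz
    have : h ≤ s₁ := Nat.le_of_dvd (by omega) hdvd
    omega
  have hcardle : A.card ≤ m := le_trans (Finset.card_le_card hsub) (le_trans
    Finset.card_image_le (by simp))
  refine ⟨b, fun k hk => ?_⟩
  have := hmA k (by omega)
  rwa [Nat.cast_add, ← add_assoc, ← hbdef] at this

open Finset

/-- A downward-closed subset of `Fin N` is an initial segment. -/
lemma initseg {N : ℕ} (S : Finset (Fin N))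
    (hdc : ∀ i j : Fin N, i ≤ j → j ∈ S → i ∈ S) (i : Fin N) :
    i ∈ S ↔ (i : ℕ) < S.card := by
  have hN : 0 < N := i.pos
  have hiN : (i : ℕ) < N := i.isLt
  constructor
  · intro hi
    have hcard : (Finset.range ((i : ℕ) + 1)).card ≤ S.card := by
      apply Finset.card_le_card_of_injOn (fun t => (⟨min t (N - 1), by omega⟩ : Fin N))
      · intro t ht
        have ht2 : t < (i : ℕ) + 1 := by simpa using ht
        apply hdc _ i _ hi
        rw [Fin.le_def]
        show min t (N - 1) ≤ (i : ℕ)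
        omega
      · intro t ht t' ht' e
        have ht2 : t < (i : ℕ) + 1 := by simpa using ht
        have ht2' : t' < (i : ℕ) + 1 := by simpa using ht'
        have h2 : min t (N - 1) = min t' (N - 1) := congrArg Fin.val e
        omega
    rw [Finset.card_range] at hcard
    omega
  · intro hi
    by_contra hiS
    have hsub : ∀ k ∈ S, (k : ℕ) < (i : ℕ) := by
      intro k hk
      by_contra hik
      push_neg at hik
      exact hiS (hdc i k (Fin.le_def.2 hik) hk)
    have hcard : S.card ≤ (Finset.range (i : ℕ)).card := by
      apply Finset.card_le_card_of_injOn (fun k : Fin N => (k : ℕ))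
      · intro k hk
        have := hsub k (by simpa using hk)
        simpa using this
      · intro k _ k' _ e; exact Fin.ext e
    rw [Finset.card_range] at hcard
    omega

/-- Position of a value in the sorted enumeration, from below. -/
lemma enum_pos {N : ℕ} (Y : ℕ → ℂ)
    (hsort : ∀ i j : ℕ, i < j → j < N → cLe (Y i) (Y j)) (x : ℂ)
    (hex : ∃ i : Fin N, Y (i : ℕ) = x) :
    Y ((univ.filter (fun i : Fin N => cLt (Y (i : ℕ)) x)).card) = x := by
  set S := univ.filter (fun i : Fin N => cLt (Y (i : ℕ)) x) with hS
  have hdc : ∀ i j : Fin N, i ≤ j → j ∈ S → i ∈ S := by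
    intro i j hij hj
    rw [hS, mem_filter] at hj ⊢
    refine ⟨mem_univ _, ?_⟩
    rcases eq_or_lt_of_le hij with rfl | l
    · exact hj.2
    · exact cLe_cLt_trans (hsort i j (show (i:ℕ) < (j:ℕ) from l) j.isLt) hj.2
  have hkey := initseg S hdc
  obtain ⟨i₀, hi₀⟩ := hex
  have hi₀S : i₀ ∉ S := by
    rw [hS, mem_filter]
    rintro ⟨-, hc⟩
    rw [hi₀] at hc
    exact cLt_irrefl _ hc
  have hcard_le : S.card ≤ (i₀ : ℕ) := by
    by_contra hc
    push_neg at hc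
    exact hi₀S ((hkey i₀).2 hc)
  have hcardN : S.card < N := lt_of_le_of_lt hcard_le i₀.isLt
  have hnlt : ¬ cLt (Y S.card) x := by
    intro hc
    have hmem : (⟨S.card, hcardN⟩ : Fin N) ∈ S :=
      Finset.mem_filter.2 ⟨Finset.mem_univ _, hc⟩
    have := (hkey _).1 hmem
    simp at this
  rcases eq_or_lt_of_le hcard_le with e | l
  · rw [e]; exact hi₀
  · have hle : cLe (Y S.card) (Y (i₀ : ℕ)) := hsort _ _ l i₀.isLt
    rw [hi₀] at hle
    rcases hle with hc | e
    · exact absurd hc hnlt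
    · exact e

/-- Position of a value in the sorted enumeration, from above. -/
lemma enum_pos_top {N : ℕ} (Y : ℕ → ℂ)
    (hsort : ∀ i j : ℕ, i < j → j < N → cLe (Y i) (Y j)) (x : ℂ)
    (hex : ∃ i : Fin N, Y (i : ℕ) = x) :
    Y (N - 1 - (univ.filter (fun i : Fin N => cLt x (Y (i : ℕ)))).card) = x := by
  set S := univ.filter (fun i : Fin N => cLt x (Y (i : ℕ))) with hS
  set T := univ.filter (fun i : Fin N => ¬ cLt x (Y (i : ℕ))) with hT
  have hTS : T = Sᶜ := by
    ext i
    simp [hT, hS]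
  have hTcard : T.card = N - S.card := by
    rw [hTS, Finset.card_compl]
    simp
  have hSN : S.card ≤ N := by
    have := Finset.card_le_univ S
    simpa using this
  have hdc : ∀ i j : Fin N, i ≤ j → j ∈ T → i ∈ T := by
    intro i j hij hj
    rw [hT, mem_filter] at hj ⊢
    refine ⟨mem_univ _, fun hc => ?_⟩
    rcases eq_or_lt_of_le hij with rfl | l
    · exact hj.2 hc
    · exact hj.2 (cLt_cLe_trans hc (hsort i j (show (i:ℕ) < (j:ℕ) from l) j.isLt))
  have hkey := initseg T hdc
  obtain ⟨i₀, hi₀⟩ := hex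
  have hN : 0 < N := i₀.pos
  have hi₀T : i₀ ∈ T := by
    rw [hT, mem_filter]
    exact ⟨mem_univ _, by rw [hi₀]; exact cLt_irrefl x⟩
  have hi₀lt : (i₀ : ℕ) < T.card := (hkey i₀).1 hi₀T
  have hk : N - 1 - S.card < N := by omega
  have hkT := (hkey ⟨N - 1 - S.card, hk⟩).2 (by show N - 1 - S.card < T.card; omega)
  have hnlt : ¬ cLt x (Y (N - 1 - S.card)) := by
    rw [hT, mem_filter] at hkT
    exact hkT.2
  have hi₀le : (i₀ : ℕ) ≤ N - 1 - S.card := by omega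
  rcases eq_or_lt_of_le hi₀le with e | l
  · rw [← e]; exact hi₀
  · have hle : cLe (Y (i₀ : ℕ)) (Y (N - 1 - S.card)) := hsort _ _ l (by omega)
    rw [hi₀] at hle
    rcases hle with hc | e
    · exact absurd hc hnlt
    · exact e.symm

lemma ccw_cyclic (a b c : ℂ) : cross (b - a) (c - a) = cross (c - b) (a - b) := by
  simp only [cross_def, Complex.sub_re, Complex.sub_im]; ring

lemma cross_zero_right (a : ℂ) : cross a 0 = 0 := by simp [cross_def]

open Finset

/-- The main geometric count: at least `n-2` vertices are `cLt`-below `-B`. -/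
lemma vertex_count (n : ℕ) (hn : 4 ≤ n) [NeZero (2 * (n - 1))]
    (V : ZMod (2 * (n - 1)) → ℂ) (B : ℂ)
    (hconv : PosConvex V) (hsym : DSym n V) (hBm : (-B) ∈ DiagGon V (n - 2)) :
    n - 2 ≤ (univ.filter (fun j : ZMod (2 * (n - 1)) => cLt (V j) (-B))).card := by
  by_contra hcon
  push_neg at hcon
  -- no vertex equals -B
  have hne : ∀ j : ZMod (2 * (n - 1)), V j ≠ -B := by
    intro j hj
    have := hBm j
    rw [← hj] at this
    simp [cross_zero_right] at this
  -- the complementary set A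
  set A := univ.filter (fun j : ZMod (2 * (n - 1)) => cLt (-B) (V j)) with hA
  have hmemA : ∀ j, j ∈ A ↔ cLt (-B) (V j) := by
    intro j; rw [hA, mem_filter]; simp
  have hnotA : ∀ j, j ∉ A ↔ cLt (V j) (-B) := by
    intro j
    rw [hmemA j]
    constructor
    · intro hj
      rcases cLt_trichotomy (hne j) with h | h
      · exact h
      · exact absurd h hj
    · intro hj hc
      exact cLt_asymm hj hc
  -- A is large
  have hAcard : n + 1 ≤ A.card := by
    have htot := Finset.card_filter_add_card_filter_not
      (s := (univ : Finset (ZMod (2 * (n - 1)))))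
      (p := fun j => cLt (V j) (-B))
    have hcardZ : (univ : Finset (ZMod (2 * (n - 1)))).card = 2 * (n - 1) := by
      rw [Finset.card_univ, ZMod.card]
    have heq : univ.filter (fun j : ZMod (2 * (n - 1)) => ¬ cLt (V j) (-B)) = A := by
      ext j
      rw [mem_filter, hmemA j]
      constructor
      · rintro ⟨-, hj⟩
        rcases cLt_trichotomy (hne j) with h | h
        · exact absurd h hj
        · exact h
      · intro hj
        exact ⟨mem_univ _, fun hc => cLt_asymm hc hj⟩
    rw [heq, hcardZ] at htot
    omega
  -- perturbation parameter
  have hnonempty : (univ : Finset (ZMod (2 * (n - 1)))).Nonempty := ⟨0, mem_univ 0⟩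
  set ε := univ.inf' hnonempty
    (fun j : ZMod (2 * (n - 1)) => min (thr (-B) (V j)) (thr (V j) (-B))) with hεdef
  have hε : 0 < ε := by
    rw [hεdef, Finset.lt_inf'_iff]
    intro j _
    exact lt_min (thr_pos _ _) (thr_pos _ _)
  set u := 1 - ε * Complex.I with hu
  have gA : ∀ j, j ∈ A → cross u (-B) < cross u (V j) := by
    intro j hj
    refine g_lt_of_cLt ((hmemA j).1 hj) hε ?_
    exact le_trans (Finset.inf'_le _ (mem_univ j)) (min_le_left _ _)
  have gNA : ∀ j, j ∉ A → cross u (V j) < cross u (-B) := by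
    intro j hj
    refine g_lt_of_cLt ((hnotA j).1 hj) hε ?_
    exact le_trans (Finset.inf'_le _ (mem_univ j)) (min_le_right _ _)
  -- edge positivity helper
  have edge : ∀ j i : ZMod (2 * (n - 1)), i ≠ j → i ≠ j + 1 →
      0 < cross (V (j + 1) - V j) (V i - V j) := by
    intro j i h1 h2
    have := hconv (j + 1) i (by rwa [add_sub_cancel_right]) h2
    rwa [add_sub_cancel_right] at this
  -- unique run start
  have huniq : ∀ j j' : ZMod (2 * (n - 1)), j ∉ A → j + 1 ∈ A → j' ∉ A → j' + 1 ∈ A →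
      j = j' := by
    intro j j' hj hj1 hj' hj'1
    by_contra hne'
    have d1 : j' ≠ j := fun e => hne' e.symm
    have d2 : j + 1 ≠ j' := fun e => hj' (e ▸ hj1)
    have d3 : j' + 1 ≠ j := fun e => hj (e ▸ hj'1)
    have d4 : j' + 1 ≠ j + 1 := fun e => hne' (add_right_cancel e).symm
    -- four ccw facts for P1 = V (j+1), P2 = V j', P3 = V (j'+1), P4 = V j
    have n123 : 0 < cross (V j' - V (j + 1)) (V (j' + 1) - V (j + 1)) := by
      rw [ccw_cyclic]
      exact edge j' (j + 1) d2 d4.symm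
    have n134 : 0 < cross (V (j' + 1) - V (j + 1)) (V j - V (j + 1)) := by
      rw [ccw_cyclic, ccw_cyclic]
      exact edge j (j' + 1) d3 d4
    have n234 : 0 < cross (V (j' + 1) - V j') (V j - V j') := edge j' j d1.symm d3.symm
    have n124 : 0 < cross (V j' - V (j + 1)) (V j - V (j + 1)) := by
      rw [ccw_cyclic, ccw_cyclic]
      exact edge j j' d1 d2.symm
    exact alternation n123 n134 n234 n124 (gA _ hj1) (gNA _ hj') (gA _ hj'1) (gNA _ hj)
  -- extract a long run inside A
  have hrun : ∃ b : ZMod (2 * (n - 1)), ∀ k : ℕ, k ≤ n → b + (k : ZMod (2 * (n - 1))) ∈ A := by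
    by_cases hq : ∃ q, q ∉ A
    · exact run_lemma (by omega) n A hAcard hq huniq
    · push_neg at hq
      exact ⟨0, fun k _ => hq _⟩
  obtain ⟨b, hb⟩ := hrun
  -- cast arithmetic
  have c1 : ((n - 2 : ℕ) : ZMod (2 * (n - 1))) + 1 = ((n - 1 : ℕ) : ZMod (2 * (n - 1))) := by
    have := zmod_cast_succ (h := 2 * (n - 1)) (a := n - 1) (by omega)
    rwa [show n - 1 - 1 = n - 2 by omega] at this
  have c2 : ((n - 1 : ℕ) : ZMod (2 * (n - 1))) + 1 = ((n : ℕ) : ZMod (2 * (n - 1))) := by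
    have := zmod_cast_succ (h := 2 * (n - 1)) (a := n) (by omega)
    rwa [show n - 1 = n - 1 by rfl] at this
  have c3 : ((n : ℕ) : ZMod (2 * (n - 1))) + ((n - 2 : ℕ) : ZMod (2 * (n - 1))) = 0 := by
    rw [← Nat.cast_add, show n + (n - 2) = 2 * (n - 1) by omega, ZMod.natCast_self]
  have cne1 : ((n - 2 : ℕ) : ZMod (2 * (n - 1))) ≠ 0 := by
    intro e
    rw [show (0 : ZMod (2 * (n - 1))) = ((0 : ℕ) : ZMod (2 * (n - 1))) by simp] at e
    have := zmod_cast_inj (by omega) (by omega) e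
    omega
  have cne2 : ((n - 1 : ℕ) : ZMod (2 * (n - 1))) ≠ 0 := by
    intro e
    rw [show (0 : ZMod (2 * (n - 1))) = ((0 : ℕ) : ZMod (2 * (n - 1))) by simp] at e
    have := zmod_cast_inj (by omega) (by omega) e
    omega
  have cne3 : ((n - 2 : ℕ) : ZMod (2 * (n - 1))) ≠ 1 := by
    intro e
    rw [show (1 : ZMod (2 * (n - 1))) = ((1 : ℕ) : ZMod (2 * (n - 1))) by simp] at e
    have := zmod_cast_inj (by omega) (by omega) e
    omega
  -- the four special vertices
  have hsb : V (b + ((n - 1 : ℕ) : ZMod (2 * (n - 1)))) = -V b := hsym b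
  have hsb1 : V (b + ((n : ℕ) : ZMod (2 * (n - 1)))) = -V (b + 1) := by
    have := hsym (b + 1)
    rwa [show b + 1 + ((n - 1 : ℕ) : ZMod (2 * (n - 1))) = b + ((n : ℕ) : ZMod (2 * (n - 1)))
      by rw [← c2]; ring] at this
  have hsR : V (b + ((n - 1 : ℕ) : ZMod (2 * (n - 1))) + ((n - 2 : ℕ) : ZMod (2 * (n - 1))))
      = -V (b + ((n - 2 : ℕ) : ZMod (2 * (n - 1)))) := by
    have := hsym (b + ((n - 2 : ℕ) : ZMod (2 * (n - 1))))
    rwa [show b + ((n - 2 : ℕ) : ZMod (2 * (n - 1))) + ((n - 1 : ℕ) : ZMod (2 * (n - 1)))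
      = b + ((n - 1 : ℕ) : ZMod (2 * (n - 1))) + ((n - 2 : ℕ) : ZMod (2 * (n - 1))) by ring]
      at this
  -- diagonal constraints
  have h1 := hBm (b + 1)
  rw [show b + 1 + ((n - 2 : ℕ) : ZMod (2 * (n - 1))) = b + ((n - 1 : ℕ) : ZMod (2 * (n - 1)))
    by rw [← c1]; ring, hsb] at h1
  have h3 := hBm b
  have h2 := hBm (b + ((n : ℕ) : ZMod (2 * (n - 1))))
  rw [show b + ((n : ℕ) : ZMod (2 * (n - 1))) + ((n - 2 : ℕ) : ZMod (2 * (n - 1))) = b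
    by rw [add_assoc, c3, add_zero], hsb1] at h2
  have h4 := hBm (b + ((n - 1 : ℕ) : ZMod (2 * (n - 1))))
  rw [hsR, hsb] at h4
  -- convexity side conditions
  have hA' : 0 < cross (V (b + 1) - V b) (V (b + ((n - 2 : ℕ) : ZMod (2 * (n - 1)))) - V b) := by
    apply edge
    · intro e
      exact cne1 (by rwa [add_eq_left] at e)
    · intro e
      exact cne3 (add_left_cancel e)
  have hB' : 0 < cross (V (b + ((n - 1 : ℕ) : ZMod (2 * (n - 1))))
      - V (b + ((n - 2 : ℕ) : ZMod (2 * (n - 1)))))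
      (V b - V (b + ((n - 2 : ℕ) : ZMod (2 * (n - 1))))) := by
    have := edge (b + ((n - 2 : ℕ) : ZMod (2 * (n - 1)))) b
      (fun e => cne1 (by rwa [left_eq_add] at e))
      (fun e => cne2 (by
        rw [show b + ((n - 2 : ℕ) : ZMod (2 * (n - 1))) + 1
          = b + ((n - 1 : ℕ) : ZMod (2 * (n - 1))) by rw [← c1]; ring] at e
        exact (by rwa [left_eq_add] at e)))
    rwa [show b + ((n - 2 : ℕ) : ZMod (2 * (n - 1))) + 1
      = b + ((n - 1 : ℕ) : ZMod (2 * (n - 1))) by rw [← c1]; ring] at this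
  rw [hsb] at hB'
  -- membership of the four corners
  have m0 : b ∈ A := by
    have := hb 0 (by omega)
    simpa using this
  have m1 : b + 1 ∈ A := by
    have := hb 1 (by omega)
    simpa using this
  have mn1 : b + ((n - 1 : ℕ) : ZMod (2 * (n - 1))) ∈ A := hb (n - 1) (by omega)
  have mn : b + ((n : ℕ) : ZMod (2 * (n - 1))) ∈ A := hb n (by omega)
  -- the trap
  refine trap (u := u) (X := -B) (P := V (b + 1)) (P₀ := V b)
    (R := V (b + ((n - 2 : ℕ) : ZMod (2 * (n - 1))))) ?_ ?_ ?_ ?_ ?_ ?_ ?_ ?_ ?_ ?_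
  · exact h1
  · exact h2
  · exact h3
  · exact h4
  · exact hA'
  · exact hB'
  · exact gA _ m1
  · rw [← hsb1]; exact gA _ mn
  · exact gA _ m0
  · rw [← hsb]; exact gA _ mn1

lemma count_transfer (n : ℕ) [NeZero (2 * (n - 1))] (V : ZMod (2 * (n - 1)) → ℂ) (B : ℂ)
    (Y : ℕ → ℂ) (e : Fin (2 * n) ≃ (ZMod (2 * (n - 1)) ⊕ Fin 2))
    (hY : ∀ m : Fin (2 * n), Y (m : ℕ) = DPoints n V B (e m)) (Pr : ℂ → Prop) :
    (univ.filter (fun i : Fin (2 * n) => Pr (Y (i : ℕ)))).card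
      = (univ.filter (fun j : ZMod (2 * (n - 1)) => Pr (V j))).card
        + (univ.filter (fun b : Fin 2 => Pr (if b = 0 then B else -B))).card := by
  have step1 : (univ.filter (fun i : Fin (2 * n) => Pr (Y (i : ℕ)))).card
      = (univ.filter (fun p : ZMod (2 * (n - 1)) ⊕ Fin 2 => Pr (DPoints n V B p))).card := by
    apply Finset.card_bij (fun a _ => e a)
    · intro a ha
      rw [mem_filter] at ha ⊢
      exact ⟨mem_univ _, by rw [← hY a]; exact ha.2⟩
    · intro a _ b _ hab
      exact e.injective hab
    · intro p hp
      rw [mem_filter] at hp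
      refine ⟨e.symm p, ?_, e.apply_symm_apply p⟩
      rw [mem_filter]
      refine ⟨mem_univ _, ?_⟩
      rw [hY (e.symm p), e.apply_symm_apply]
      exact hp.2
  have hleft : (univ.filter (fun p : ZMod (2 * (n - 1)) ⊕ Fin 2 =>
      Pr (DPoints n V B p))).toLeft = univ.filter (fun j : ZMod (2 * (n - 1)) => Pr (V j)) := by
    ext j
    rw [Finset.mem_toLeft, mem_filter, mem_filter]
    simp [DPoints]
  have hright : (univ.filter (fun p : ZMod (2 * (n - 1)) ⊕ Fin 2 =>
      Pr (DPoints n V B p))).toRight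
      = univ.filter (fun b : Fin 2 => Pr (if b = 0 then B else -B)) := by
    ext b
    rw [Finset.mem_toRight, mem_filter, mem_filter]
    simp [DPoints]
  rw [step1, ← Finset.card_toLeft_add_card_toRight, hleft, hright]


/-- (Position of the punctures, §4.2.) For a stable `2(n-1)`-gon of type `D_n`, at least
`n-2` of the vertices are smaller than `B₋ = -B`; consequently, in the increasing
enumeration `Y 0, …, Y (2n-1)` of the `2n` marked points (where `Y (n-1), Y (n-2)` are
the points `Y_{-1}, Y_{-2}` and `Y n, Y (n+1)` are `Y_1, Y_2` of the paper), the puncture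
`B₋` is `Y_{-1}` or `Y_{-2}`, and symmetrically `B₊` is `Y_1` or `Y_2`. -/
theorem puncture_position (n : ℕ) (hn : 4 ≤ n) (V : ZMod (2 * (n - 1)) → ℂ) (B : ℂ)
    (hst : IsStableDGon n V B) (Y : ℕ → ℂ)
    (e : Fin (2 * n) ≃ (ZMod (2 * (n - 1)) ⊕ Fin 2)) (henum : DEnum n V B Y e) :
    (∃ S : Finset (ZMod (2 * (n - 1))), n - 2 ≤ S.card ∧ ∀ j ∈ S, cLt (V j) (-B)) ∧
    (-B = Y (n - 1) ∨ -B = Y (n - 2)) ∧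
    (B = Y n ∨ B = Y (n + 1)) := by
  haveI : NeZero (2 * (n - 1)) := ⟨by omega⟩
  obtain ⟨hconv, hsym, hle, hBm, hBp⟩ := hst
  obtain ⟨hY, hsort⟩ := henum
  have hnc1 : ¬ cLt B (-B) := by
    rcases hle with h | h
    · exact fun hc => cLt_asymm h hc
    · intro hc; rw [h] at hc; exact cLt_irrefl _ hc
  set SL := univ.filter (fun j : ZMod (2 * (n - 1)) => cLt (V j) (-B)) with hSL
  set SU := univ.filter (fun j : ZMod (2 * (n - 1)) => cLt B (V j)) with hSU
  have hL : n - 2 ≤ SL.card := vertex_count n hn V B hconv hsym hBm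
  have c0 : ((n - 1 : ℕ) : ZMod (2 * (n - 1))) + ((n - 1 : ℕ) : ZMod (2 * (n - 1))) = 0 := by
    rw [← Nat.cast_add, show (n - 1) + (n - 1) = 2 * (n - 1) by omega, ZMod.natCast_self]
  have hUL : SU.card = SL.card := by
    apply Finset.card_bij (fun j _ => j + ((n - 1 : ℕ) : ZMod (2 * (n - 1))))
    · intro a ha
      rw [hSU, mem_filter] at ha
      rw [hSL, mem_filter]
      refine ⟨mem_univ _, ?_⟩
      rw [hsym a]
      exact cLt_neg ha.2
    · intro a _ b _ hab
      exact add_right_cancel hab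
    · intro k hk
      rw [hSL, mem_filter] at hk
      refine ⟨k + ((n - 1 : ℕ) : ZMod (2 * (n - 1))), ?_, by rw [add_assoc, c0, add_zero]⟩
      rw [hSU, mem_filter]
      refine ⟨mem_univ _, ?_⟩
      rw [hsym k]
      have := cLt_neg hk.2
      rwa [neg_neg] at this
  have hdisj : Disjoint SL SU := by
    rw [Finset.disjoint_left]
    intro j hj1 hj2
    rw [hSL, mem_filter] at hj1
    rw [hSU, mem_filter] at hj2
    exact hnc1 (cLt_trans hj2.2 hj1.2)
  have hcardZ : (univ : Finset (ZMod (2 * (n - 1)))).card = 2 * (n - 1) := by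
    rw [Finset.card_univ, ZMod.card]
  have hsum : SL.card + SU.card ≤ 2 * (n - 1) := by
    rw [← Finset.card_union_of_disjoint hdisj]
    calc (SL ∪ SU).card ≤ (univ : Finset (ZMod (2 * (n - 1)))).card :=
          Finset.card_le_card (Finset.subset_univ _)
      _ = 2 * (n - 1) := hcardZ
  have hLle : SL.card ≤ n - 1 := by omega
  refine ⟨⟨SL, hL, fun j hj => (mem_filter.1 hj).2⟩, ?_, ?_⟩
  · -- position of -B
    have hex : ∃ i : Fin (2 * n), Y (i : ℕ) = -B := by
      refine ⟨e.symm (Sum.inr 1), ?_⟩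
      rw [hY (e.symm (Sum.inr 1)), e.apply_symm_apply]
      simp [DPoints]
    have hpos := enum_pos (N := 2 * n) Y hsort (-B) hex
    have hcount := count_transfer n V B Y e hY (fun z => cLt z (-B))
    have hfin2 : (univ.filter (fun b : Fin 2 =>
        cLt (if b = 0 then B else -B) (-B))).card = 0 := by
      rw [Finset.card_eq_zero, Finset.filter_eq_empty_iff]
      intro b _
      fin_cases b
      · simpa using hnc1
      · simpa using cLt_irrefl (-B)
    rw [hcount, hfin2, ← hSL] at hpos
    have : SL.card = n - 2 ∨ SL.card = n - 1 := by omega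
    rcases this with h | h
    · rw [h, Nat.add_zero] at hpos
      exact Or.inr hpos.symm
    · rw [h, Nat.add_zero] at hpos
      exact Or.inl hpos.symm
  · -- position of B
    have hex : ∃ i : Fin (2 * n), Y (i : ℕ) = B := by
      refine ⟨e.symm (Sum.inr 0), ?_⟩
      rw [hY (e.symm (Sum.inr 0)), e.apply_symm_apply]
      simp [DPoints]
    have hpos := enum_pos_top (N := 2 * n) Y hsort B hex
    have hcount := count_transfer n V B Y e hY (fun z => cLt B z)
    have hfin2 : (univ.filter (fun b : Fin 2 =>
        cLt B (if b = 0 then B else -B))).card = 0 := by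
      rw [Finset.card_eq_zero, Finset.filter_eq_empty_iff]
      intro b _
      fin_cases b
      · simpa using cLt_irrefl B
      · simpa using hnc1
    rw [hcount, hfin2, ← hSU, hUL] at hpos
    have : SL.card = n - 2 ∨ SL.card = n - 1 := by omega
    rcases this with h | h
    · rw [h, Nat.add_zero, show 2 * n - 1 - (n - 2) = n + 1 by omega] at hpos
      exact Or.inr hpos.symm
    · rw [h, Nat.add_zero, show 2 * n - 1 - (n - 1) = n by omega] at hpos
      exact Or.inl hpos.symm
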